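/- In the near-field plane Ω of order 9 constructed over the miniquaternion near-field S, Pascal's theorem fails: the six points A=(-1,i), B=(0,1), C=(1,0), D=(i,j), E=(-k,-i), F=(0,1,0) (an ideal point) all lie on a common oval, yet the three intersection points P = AB ∩ DE = (1,k,0), Q = BC ∩ EF = (-k,-j), R = CD ∩ FA = (-1,-i) are not collinear. -/
import Mathlib


/-- The miniquaternion multiplication on a field of 9 elements: `x ⊙ y = x·y` if `y` is
a square, and `x ⊙ y = x³·y` otherwise (Dickson's construction). -/
noncomputable def nmul {K : Type*} [Field K] (x y : K) : K :=
  letI := Classical.propDecidable (IsSquare y)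
  if IsSquare y then x * y else x ^ 3 * y

/-- Points of the near-field plane `Ω` of order 9: 81 proper points `(x,y)`, 9 ideal
points `(1,μ,0)` (one for each slope `μ`), and the ideal point `(0,1,0)`. -/
inductive Pt (K : Type*) where
  | prop : K → K → Pt K
  | ideal : K → Pt K
  | inf : Pt K
deriving DecidableEq

/-- Lines of the near-field plane `Ω`: 81 proper lines `y = x⊙μ + ν`, 9 vertical lines
`x = λ`, and the ideal line. -/
inductive Ln (K : Type*) where
  | prop : K → K → Ln K
  | vert : K → Ln K
  | inf : Ln K
deriving DecidableEq

/-- Incidence in the plane `Ω`: `(x,y)` lies on `y = x⊙μ + ν` and on `x = λ` (if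
`x = λ`); the ideal point of slope `μ` lies on all lines of slope `μ` and on the ideal
line; `(0,1,0)` lies on all vertical lines and on the ideal line. -/
noncomputable def Incid {K : Type*} [Field K] : Pt K → Ln K → Prop
  | .prop x y, .prop μ ν => y = nmul x μ + ν
  | .prop x _, .vert l => x = l
  | .prop _ _, .inf => False
  | .ideal m, .prop μ _ => m = μ
  | .ideal _, .vert _ => False
  | .ideal _, .inf => True
  | .inf, .prop _ _ => False
  | .inf, .vert _ => True
  | .inf, .inf => True

structure MQF9 where
  re : ZMod 3
  im : ZMod 3
deriving DecidableEq

namespace MQF9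
instance : Zero MQF9 := ⟨⟨0,0⟩⟩
instance : One MQF9 := ⟨⟨1,0⟩⟩
instance : Add MQF9 := ⟨fun x y => ⟨x.re + y.re, x.im + y.im⟩⟩
instance : Neg MQF9 := ⟨fun x => ⟨-x.re, -x.im⟩⟩
instance : Mul MQF9 := ⟨fun x y => ⟨x.re*y.re - x.im*y.im, x.re*y.im + x.im*y.re⟩⟩
instance : Inv MQF9 :=
  ⟨fun x => ⟨x.re * (x.re*x.re + x.im*x.im), -(x.im * (x.re*x.re + x.im*x.im))⟩⟩

@[simp] lemma mul_re' (x y : MQF9) : (x*y).re = x.re*y.re - x.im*y.im := rfl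
@[simp] lemma mul_im' (x y : MQF9) : (x*y).im = x.re*y.im + x.im*y.re := rfl
@[simp] lemma add_re' (x y : MQF9) : (x+y).re = x.re + y.re := rfl
@[simp] lemma add_im' (x y : MQF9) : (x+y).im = x.im + y.im := rfl
@[simp] lemma neg_re' (x : MQF9) : (-x).re = -x.re := rfl
@[simp] lemma neg_im' (x : MQF9) : (-x).im = -x.im := rfl
@[simp] lemma one_re' : (1 : MQF9).re = 1 := rfl
@[simp] lemma one_im' : (1 : MQF9).im = 0 := rfl
@[simp] lemma zero_re' : (0 : MQF9).re = 0 := rfl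
@[simp] lemma zero_im' : (0 : MQF9).im = 0 := rfl

lemma ext' : ∀ {x y : MQF9}, x.re = y.re → x.im = y.im → x = y
  | ⟨_,_⟩, ⟨_,_⟩, rfl, rfl => rfl

def elemList : List MQF9 := [⟨0,0⟩,⟨0,1⟩,⟨0,2⟩,⟨1,0⟩,⟨1,1⟩,⟨1,2⟩,⟨2,0⟩,⟨2,1⟩,⟨2,2⟩]

def univFinset : Finset MQF9 := ⟨(elemList : Multiset MQF9), by decide⟩

instance instFin : Fintype MQF9 where
  elems := univFinset
  complete := fun x => by
    cases x
    exact (by decide : ∀ a b : ZMod 3, (MQF9.mk a b) ∈ univFinset) _ _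

instance instCommRing : CommRing MQF9 where
  add_assoc := by intros; apply ext' <;> simp <;> ring
  zero_add := by intros; apply ext' <;> simp
  add_zero := by intros; apply ext' <;> simp
  add_comm := by intros; apply ext' <;> simp <;> ring
  neg_add_cancel := by intros; apply ext' <;> simp
  nsmul := nsmulRec
  zsmul := zsmulRec
  mul_assoc := by intros; apply ext' <;> simp <;> ring
  one_mul := by intros; apply ext' <;> simp
  mul_one := by intros; apply ext' <;> simp
  left_distrib := by intros; apply ext' <;> simp <;> ring
  right_distrib := by intros; apply ext' <;> simp <;> ring
  mul_comm := by intros; apply ext' <;> simp <;> ring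
  zero_mul := by intros; apply ext' <;> simp
  mul_zero := by intros; apply ext' <;> simp

instance instField : Field MQF9 :=
  { instCommRing with
    inv := fun x => x⁻¹
    exists_pair_ne := ⟨0, 1, by decide⟩
    mul_inv_cancel := by decide
    inv_zero := by decide
    nnqsmul := _
    qsmul := _ }

lemma card9 : Fintype.card MQF9 = 9 := rfl

end MQF9

namespace MQF9

instance decIsSquare : DecidablePred (IsSquare : MQF9 → Prop) :=
  fun y => decidable_of_iff (∃ r : MQF9, y = r * r) Iff.rfl

def nmulB (x y : MQF9) : MQF9 := if y.im = 0 ∨ y.re = 0 then x * y else x * x * x * y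

lemma isSquareB_iff : ∀ y : MQF9, IsSquare y ↔ (y.im = 0 ∨ y.re = 0) := by decide

lemma nmul_eq_nmulB (x y : MQF9) : nmul x y = nmulB x y := by
  unfold nmul nmulB
  by_cases h : IsSquare y
  · rw [if_pos h, if_pos ((isSquareB_iff y).mp h)]
  · rw [if_neg h, if_neg (fun hc => h ((isSquareB_iff y).mpr hc))]
    ring

def IncidB : Pt MQF9 → Ln MQF9 → Bool
  | .prop x y, .prop μ ν => y == nmulB x μ + ν
  | .prop x _, .vert l => x == l
  | .prop _ _, .inf => false
  | .ideal m, .prop μ _ => m == μ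
  | .ideal _, .vert _ => false
  | .ideal _, .inf => true
  | .inf, .prop _ _ => false
  | .inf, .vert _ => true
  | .inf, .inf => true

lemma incidB_iff (p : Pt MQF9) (l : Ln MQF9) : IncidB p l = true ↔ Incid p l := by
  cases p <;> cases l <;> simp [IncidB, Incid, nmul_eq_nmulB]

instance decIncid : ∀ (p : Pt MQF9) (l : Ln MQF9), Decidable (Incid p l) :=
  fun p l => decidable_of_iff (IncidB p l = true) (incidB_iff p l)

def mkLn : (MQF9 × MQF9) ⊕ MQF9 ⊕ Unit → Ln MQF9
  | .inl (m, n) => .prop m n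
  | .inr (.inl l) => .vert l
  | .inr (.inr _) => .inf

instance : Fintype (Ln MQF9) :=
  Fintype.ofBijective mkLn
    ⟨by rintro (⟨m,n⟩|l|⟨⟩) (⟨m',n'⟩|l'|⟨⟩) h <;> simp_all [mkLn],
     by rintro (⟨m,n⟩|l|⟨⟩)
        · exact ⟨.inl (m,n), rfl⟩
        · exact ⟨.inr (.inl l), rfl⟩
        · exact ⟨.inr (.inr ()), rfl⟩⟩

def i9 : MQF9 := ⟨0,1⟩
def j9 : MQF9 := ⟨1,1⟩
def k9 : MQF9 := ⟨1,2⟩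

def pts9 : Fin 10 → Pt MQF9 :=
  ![.prop (-1) i9, .prop 0 1, .prop 1 0, .prop i9 j9, .prop (-k9) (-i9), .inf,
    .prop (-i9) (-j9), .prop j9 k9, .prop (-j9) (-1), .ideal 0]


lemma pts9_inj : Function.Injective pts9 := by decide

lemma oval9 : ∀ L : Ln MQF9,
    (Finset.univ.filter fun a : Fin 10 => Incid (pts9 a) L).card ≤ 2 := by decide

def A9 : Pt MQF9 := .prop (-1) i9
def B9 : Pt MQF9 := .prop 0 1
def C9 : Pt MQF9 := .prop 1 0
def D9 : Pt MQF9 := .prop i9 j9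
def E9 : Pt MQF9 := .prop (-k9) (-i9)
def F9 : Pt MQF9 := .inf
def P9 : Pt MQF9 := .ideal k9
def Q9 : Pt MQF9 := .prop (-k9) (-j9)
def R9 : Pt MQF9 := .prop (-1) (-i9)
def lAB9 : Ln MQF9 := .prop k9 1
def lDE9 : Ln MQF9 := .prop k9 (-j9)
def lBC9 : Ln MQF9 := .prop (-1) 1
def lEF9 : Ln MQF9 := .vert (-k9)
def lCD9 : Ln MQF9 := .prop (-i9) i9
def lFA9 : Ln MQF9 := .vert (-1)

lemma incids9 :
    Incid A9 lAB9 ∧ Incid B9 lAB9 ∧ Incid D9 lDE9 ∧ Incid E9 lDE9 ∧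
    Incid B9 lBC9 ∧ Incid C9 lBC9 ∧ Incid E9 lEF9 ∧ Incid F9 lEF9 ∧
    Incid C9 lCD9 ∧ Incid D9 lCD9 ∧ Incid F9 lFA9 ∧ Incid A9 lFA9 ∧
    Incid P9 lAB9 ∧ Incid P9 lDE9 ∧ Incid Q9 lBC9 ∧ Incid Q9 lEF9 ∧
    Incid R9 lCD9 ∧ Incid R9 lFA9 := by
  decide

lemma noncol9 : ¬ ∃ L : Ln MQF9, Incid P9 L ∧ Incid Q9 L ∧ Incid R9 L := by
  decide

end MQF9

/-! ### Transfer machinery -/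

def Pt.map {K L : Type*} (g : K → L) : Pt K → Pt L
  | .prop x y => .prop (g x) (g y)
  | .ideal m => .ideal (g m)
  | .inf => .inf

def Ln.map {K L : Type*} (g : K → L) : Ln K → Ln L
  | .prop m n => .prop (g m) (g n)
  | .vert l => .vert (g l)
  | .inf => .inf

lemma Pt.map_injective {K L : Type*} (g : K → L) (hg : Function.Injective g) :
    Function.Injective (Pt.map g) := by
  intro p q h
  cases p <;> cases q <;> simp [Pt.map] at h ⊢ <;>
    first
      | exact ⟨hg h.1, hg h.2⟩
      | exact hg h

lemma Ln.map_surjective {K L : Type*} (g : K → L) (hg : Function.Surjective g) :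
    Function.Surjective (Ln.map g) := by
  rintro (⟨m, n⟩ | l | _)
  · obtain ⟨m', rfl⟩ := hg m
    obtain ⟨n', rfl⟩ := hg n
    exact ⟨.prop m' n', rfl⟩
  · obtain ⟨l', rfl⟩ := hg l
    exact ⟨.vert l', rfl⟩
  · exact ⟨.inf, rfl⟩

lemma map_nmul {K L : Type*} [Field K] [Field L] (g : K ≃+* L) (x y : K) :
    g (nmul x y) = nmul (g x) (g y) := by
  have hs : IsSquare (g y) ↔ IsSquare y := by
    constructor
    · rintro ⟨r, hr⟩
      refine ⟨g.symm r, ?_⟩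
      have := congrArg g.symm hr
      simpa using this
    · rintro ⟨r, hr⟩
      exact ⟨g r, by rw [hr, map_mul]⟩
  unfold nmul
  by_cases h : IsSquare y
  · rw [if_pos h, if_pos (hs.mpr h), map_mul]
  · rw [if_neg h, if_neg (fun hc => h (hs.mp hc)), map_mul, map_pow]

lemma map_incid {K L : Type*} [Field K] [Field L] (g : K ≃+* L) (p : Pt K) (l : Ln K) :
    Incid (p.map g) (l.map g) ↔ Incid p l := by
  cases p <;> cases l
  case prop.prop x y μ ν =>
    show (g y = nmul (g x) (g μ) + g ν) ↔ (y = nmul x μ + ν)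
    rw [← map_nmul g, ← map_add, g.injective.eq_iff]
  all_goals simp [Incid, Pt.map, Ln.map, g.injective.eq_iff]


/-- Pascal's theorem fails in the near-field plane `Ω` of order 9: the six points
`A=(-1,i)`, `B=(0,1)`, `C=(1,0)`, `D=(i,j)`, `E=(-k,-i)`, `F=(0,1,0)` lie on a common
oval, the opposite sides of the hexagon meet in `P = AB ∩ DE = (1,k,0)`,
`Q = BC ∩ EF = (-k,-j)`, `R = CD ∩ FA = (-1,-i)`, yet `P`, `Q`, `R` are not collinear. -/
theorem pascal_fails_in_omega (K : Type*) [Field K] [Fintype K]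
    (hK : Fintype.card K = 9) (i : K) (hi : i * i = -1)
    (j k : K) (hj : j = 1 + i) (hk : k = 1 - i) :
    let A : Pt K := .prop (-1) i
    let B : Pt K := .prop 0 1
    let C : Pt K := .prop 1 0
    let D : Pt K := .prop i j
    let E : Pt K := .prop (-k) (-i)
    let F : Pt K := .inf
    let lAB : Ln K := .prop k 1
    let lDE : Ln K := .prop k (-j)
    let lBC : Ln K := .prop (-1) 1
    let lEF : Ln K := .vert (-k)
    let lCD : Ln K := .prop (-i) i
    let lFA : Ln K := .vert (-1)
    let P : Pt K := .ideal k
    let Q : Pt K := .prop (-k) (-j)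
    let R : Pt K := .prop (-1) (-i)
    -- the six points lie on a common oval
    (∃ pts : Fin 10 → Pt K, Function.Injective pts ∧
      (∀ a b c : Fin 10, a ≠ b → b ≠ c → a ≠ c →
        ¬ ∃ L : Ln K, Incid (pts a) L ∧ Incid (pts b) L ∧ Incid (pts c) L) ∧
      A ∈ Set.range pts ∧ B ∈ Set.range pts ∧ C ∈ Set.range pts ∧
      D ∈ Set.range pts ∧ E ∈ Set.range pts ∧ F ∈ Set.range pts) ∧
    -- the listed lines are the sides of the hexagon
    (Incid A lAB ∧ Incid B lAB ∧ Incid D lDE ∧ Incid E lDE ∧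
     Incid B lBC ∧ Incid C lBC ∧ Incid E lEF ∧ Incid F lEF ∧
     Incid C lCD ∧ Incid D lCD ∧ Incid F lFA ∧ Incid A lFA) ∧
    -- P, Q, R are the intersections of opposite sides
    (Incid P lAB ∧ Incid P lDE ∧ Incid Q lBC ∧ Incid Q lEF ∧
     Incid R lCD ∧ Incid R lFA) ∧
    -- but P, Q, R are not collinear
    ¬ ∃ L : Ln K, Incid P L ∧ Incid Q L ∧ Incid R L := by
  intro A B C D E F lAB lDE lBC lEF lCD lFA P Q R
  -- `K` has characteristic 3
  have h9 : ((Fintype.card K : ℕ) : K) = 0 := FiniteField.cast_card_eq_zero K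
  rw [hK] at h9
  have h3 : (3 : K) = 0 := by
    have h' : (3 : K) * 3 = 0 := by push_cast at h9; linear_combination h9
    rcases mul_eq_zero.mp h' with h | h <;> exact h
  have hdvd : ringChar K ∣ 3 := ringChar.dvd (by exact_mod_cast h3)
  have hchar : ringChar K = 3 :=
    Or.resolve_left ((Nat.dvd_prime Nat.prime_three).1 hdvd) CharP.ringChar_ne_one
  haveI : CharP K 3 := hchar ▸ ringChar.charP K
  -- the ring isomorphism from the concrete model
  let c : ZMod 3 →+* K := ZMod.castHom dvd_rfl K
  let f : MQF9 →+* K :=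
    { toFun := fun p => c p.re + c p.im * i
      map_one' := by simp
      map_zero' := by simp
      map_add' := by
        intro x y
        simp only [MQF9.add_re', MQF9.add_im', map_add]
        ring
      map_mul' := by
        intro x y
        simp only [MQF9.mul_re', MQF9.mul_im', map_add, map_sub, map_mul]
        linear_combination (-(c x.im * c y.im)) * hi }
  have hbij : Function.Bijective f :=
    (Fintype.bijective_iff_injective_and_card f).mpr ⟨f.injective, by rw [MQF9.card9, hK]⟩
  let e : MQF9 ≃+* K := RingEquiv.ofBijective f hbij
  -- values of `e` on the relevant elements
  have hei : e MQF9.i9 = i := by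
    show c 0 + c 1 * i = i
    simp
  have hej : e MQF9.j9 = j := by
    have h : MQF9.j9 = 1 + MQF9.i9 := by decide
    rw [h, map_add, map_one, hei, hj]
  have hek : e MQF9.k9 = k := by
    have h : MQF9.k9 = 1 - MQF9.i9 := by decide
    rw [h, map_sub, map_one, hei, hk]
  -- the images of the concrete points and lines
  have hA : Pt.map e MQF9.A9 = A := by
    show Pt.map e (.prop (-1) MQF9.i9) = Pt.prop (-1) i
    simp [Pt.map, hei]
  have hB : Pt.map e MQF9.B9 = B := by
    show Pt.map e (.prop 0 1) = Pt.prop 0 1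
    simp [Pt.map]
  have hC : Pt.map e MQF9.C9 = C := by
    show Pt.map e (.prop 1 0) = Pt.prop 1 0
    simp [Pt.map]
  have hD : Pt.map e MQF9.D9 = D := by
    show Pt.map e (.prop MQF9.i9 MQF9.j9) = Pt.prop i j
    simp [Pt.map, hei, hej]
  have hE : Pt.map e MQF9.E9 = E := by
    show Pt.map e (.prop (-MQF9.k9) (-MQF9.i9)) = Pt.prop (-k) (-i)
    simp [Pt.map, hei, hek]
  have hF : Pt.map e MQF9.F9 = F := rfl
  have hP : Pt.map e MQF9.P9 = P := by
    show Pt.map e (.ideal MQF9.k9) = Pt.ideal k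
    simp [Pt.map, hek]
  have hQ : Pt.map e MQF9.Q9 = Q := by
    show Pt.map e (.prop (-MQF9.k9) (-MQF9.j9)) = Pt.prop (-k) (-j)
    simp [Pt.map, hej, hek]
  have hR : Pt.map e MQF9.R9 = R := by
    show Pt.map e (.prop (-1) (-MQF9.i9)) = Pt.prop (-1) (-i)
    simp [Pt.map, hei]
  have hlAB : Ln.map e MQF9.lAB9 = lAB := by
    show Ln.map e (.prop MQF9.k9 1) = Ln.prop k 1
    simp [Ln.map, hek]
  have hlDE : Ln.map e MQF9.lDE9 = lDE := by
    show Ln.map e (.prop MQF9.k9 (-MQF9.j9)) = Ln.prop k (-j)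
    simp [Ln.map, hej, hek]
  have hlBC : Ln.map e MQF9.lBC9 = lBC := by
    show Ln.map e (.prop (-1) 1) = Ln.prop (-1) 1
    simp [Ln.map]
  have hlEF : Ln.map e MQF9.lEF9 = lEF := by
    show Ln.map e (.vert (-MQF9.k9)) = Ln.vert (-k)
    simp [Ln.map, hek]
  have hlCD : Ln.map e MQF9.lCD9 = lCD := by
    show Ln.map e (.prop (-MQF9.i9) MQF9.i9) = Ln.prop (-i) i
    simp [Ln.map, hei]
  have hlFA : Ln.map e MQF9.lFA9 = lFA := by
    show Ln.map e (.vert (-1)) = Ln.vert (-1)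
    simp [Ln.map]
  have tr : ∀ (p : Pt MQF9) (l : Ln MQF9) (p' : Pt K) (l' : Ln K),
      Pt.map e p = p' → Ln.map e l = l' → Incid p l → Incid p' l' := by
    rintro p l _ _ rfl rfl h
    exact (map_incid e p l).mpr h
  obtain ⟨i1, i2, i3, i4, i5, i6, i7, i8, i9, i10, i11, i12,
    i13, i14, i15, i16, i17, i18⟩ := MQF9.incids9
  refine ⟨?_, ?_, ?_, ?_⟩
  · -- the oval
    refine ⟨Pt.map e ∘ MQF9.pts9,
      (Pt.map_injective e e.injective).comp MQF9.pts9_inj, ?_,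
      ⟨0, hA⟩, ⟨1, hB⟩, ⟨2, hC⟩, ⟨3, hD⟩, ⟨4, hE⟩, ⟨5, hF⟩⟩
    rintro a b c' hab hbc hac ⟨L, h1, h2, h3'⟩
    obtain ⟨L0, rfl⟩ := Ln.map_surjective e e.surjective L
    have h1' := (map_incid e (MQF9.pts9 a) L0).mp h1
    have h2' := (map_incid e (MQF9.pts9 b) L0).mp h2
    have h3'' := (map_incid e (MQF9.pts9 c') L0).mp h3'
    have hsub : ({a, b, c'} : Finset (Fin 10)) ⊆
        Finset.univ.filter (fun t => Incid (MQF9.pts9 t) L0) := by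
      intro t ht
      simp only [Finset.mem_insert, Finset.mem_singleton] at ht
      rcases ht with rfl | rfl | rfl <;> simp [Finset.mem_filter] <;> assumption
    have hcard : ({a, b, c'} : Finset (Fin 10)).card = 3 := by
      rw [Finset.card_insert_of_notMem (by simp [hab, hac]),
        Finset.card_insert_of_notMem (by simp [hbc]), Finset.card_singleton]
    have hle := Finset.card_le_card hsub
    rw [hcard] at hle
    have := MQF9.oval9 L0
    omega
  · exact ⟨tr _ _ _ _ hA hlAB i1, tr _ _ _ _ hB hlAB i2, tr _ _ _ _ hD hlDE i3,
      tr _ _ _ _ hE hlDE i4, tr _ _ _ _ hB hlBC i5, tr _ _ _ _ hC hlBC i6,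
      tr _ _ _ _ hE hlEF i7, tr _ _ _ _ hF hlEF i8, tr _ _ _ _ hC hlCD i9,
      tr _ _ _ _ hD hlCD i10, tr _ _ _ _ hF hlFA i11, tr _ _ _ _ hA hlFA i12⟩
  · exact ⟨tr _ _ _ _ hP hlAB i13, tr _ _ _ _ hP hlDE i14, tr _ _ _ _ hQ hlBC i15,
      tr _ _ _ _ hQ hlEF i16, tr _ _ _ _ hR hlCD i17, tr _ _ _ _ hR hlFA i18⟩
  · rintro ⟨L, h1, h2, h3'⟩
    obtain ⟨L0, rfl⟩ := Ln.map_surjective e e.surjective L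
    rw [← hP] at h1
    rw [← hQ] at h2
    rw [← hR] at h3'
    exact MQF9.noncol9 ⟨L0, (map_incid e _ _).mp h1, (map_incid e _ _).mp h2,
      (map_incid e _ _).mp h3'⟩
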